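/- arXiv:2603.16962 — 2 statements merged into one kernel-verified Lean document; each statement's English description precedes it below -/
import Mathlib

section
/- For every n ∈ ℕ, the set of CPDNN quantum channels Φ : M_n(ℂ) → M_2(ℂ) coincides with the set of CPCP quantum channels Φ : M_n(ℂ) → M_2(ℂ): a completely positive trace-preserving linear map Φ : M_n(ℂ) → M_2(ℂ) is CPDNN if and only if it is CPCP. -/
/-!
Everything is read off the Choi matrix `J = choi Φ`, which is `id ⊗ Φ` applied to the rank-one
completely positive matrix `Σ_{i,j} E_{ij} ⊗ E_{ij}`. If `Φ` is CPCP then `J` is completely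
positive, so entrywise nonnegative, and `id_k ⊗ Φ` then preserves entrywise nonnegativity;
completely positive maps preserve positive semidefiniteness. Conversely, if `Φ` is CPDNN then `J`
is doubly nonnegative, and trace preservation forces `Φ(E_{ij})_{pp} = 0` for `i ≠ j`; for
`m = 2` this says that the graph of `J` is bipartite, with the output index `p` as colouring.
A doubly nonnegative matrix with bipartite graph is completely positive (Berman): flipping the
signs on one side turns it into its comparison matrix, a positive semidefinite Z-matrix, which
maps some positive vector `w` to a nonnegative one (induction on the size, via Schur complements);
then `J` is diagonally dominant after scaling by `w`, hence completely positive. Finally, if `J`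
is completely positive then so is every `(id_k ⊗ Φ)(X)` with `X` completely positive, being a
Gram matrix of the nonnegative vectors `Σ_i x(a,i) y(i,p)`.
-/

open Matrix
open scoped ComplexOrder

/-- A complex matrix is completely positive if it is a finite sum of rank-one
matrices `x xᵀ` with `x` a real entrywise nonnegative vector (viewed in `ℂ`). -/
def IsCPMat {ι : Type*} [Fintype ι] (A : Matrix ι ι ℂ) : Prop :=
  ∃ (s : ℕ) (x : Fin s → ι → ℝ), (∀ t i, 0 ≤ x t i) ∧
    ∀ i j, A i j = ((∑ t, x t i * x t j : ℝ) : ℂ)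

/-- A complex matrix is doubly nonnegative if it is positive semidefinite and
every entry is a nonnegative real number. -/
def IsDNNMat {ι : Type*} [Fintype ι] (A : Matrix ι ι ℂ) : Prop :=
  A.PosSemidef ∧ ∀ i j, 0 ≤ (A i j).re ∧ (A i j).im = 0

/-- The map `id_k ⊗ Φ` acting blockwise: the `((a,p),(b,q))` entry of the output
is `Φ(X_{ab})_{pq}`, where `X_{ab}` is the `(a,b)` block of `X`. -/
def idTensor {n m : ℕ} (Φ : Matrix (Fin n) (Fin n) ℂ →ₗ[ℂ] Matrix (Fin m) (Fin m) ℂ)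
    (k : ℕ) (X : Matrix (Fin k × Fin n) (Fin k × Fin n) ℂ) :
    Matrix (Fin k × Fin m) (Fin k × Fin m) ℂ :=
  Matrix.of fun ap bq => Φ (Matrix.of fun i j => X (ap.1, i) (bq.1, j)) ap.2 bq.2

/-- `Φ` is completely positive as a linear map between matrix algebras. -/
def IsCPMap {n m : ℕ} (Φ : Matrix (Fin n) (Fin n) ℂ →ₗ[ℂ] Matrix (Fin m) (Fin m) ℂ) : Prop :=
  ∀ (k : ℕ) (X : Matrix (Fin k × Fin n) (Fin k × Fin n) ℂ),
    X.PosSemidef → (idTensor Φ k X).PosSemidef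

/-- `Φ` is trace-preserving. -/
def IsTP {n m : ℕ} (Φ : Matrix (Fin n) (Fin n) ℂ →ₗ[ℂ] Matrix (Fin m) (Fin m) ℂ) : Prop :=
  ∀ X, (Φ X).trace = X.trace

/-- `Φ` is CPCP: `id_k ⊗ Φ` maps completely positive matrices to completely
positive matrices for every `k`. -/
def IsCPCP {n m : ℕ} (Φ : Matrix (Fin n) (Fin n) ℂ →ₗ[ℂ] Matrix (Fin m) (Fin m) ℂ) : Prop :=
  ∀ (k : ℕ) (X : Matrix (Fin k × Fin n) (Fin k × Fin n) ℂ),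
    IsCPMat X → IsCPMat (idTensor Φ k X)

/-- `Φ` is CPDNN: `id_k ⊗ Φ` maps doubly nonnegative matrices to doubly
nonnegative matrices for every `k`. -/
def IsCPDNN {n m : ℕ} (Φ : Matrix (Fin n) (Fin n) ℂ →ₗ[ℂ] Matrix (Fin m) (Fin m) ℂ) : Prop :=
  ∀ (k : ℕ) (X : Matrix (Fin k × Fin n) (Fin k × Fin n) ℂ),
    IsDNNMat X → IsDNNMat (idTensor Φ k X)

/-- The Choi matrix `J(Φ) = Σ_{i,j} E_{ij} ⊗ Φ(E_{ij})`, with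
`((i,p),(j,q))` entry equal to `Φ(E_{ij})_{pq}`. -/
def choi {n m : ℕ} (Φ : Matrix (Fin n) (Fin n) ℂ →ₗ[ℂ] Matrix (Fin m) (Fin m) ℂ) :
    Matrix (Fin n × Fin m) (Fin n × Fin m) ℂ :=
  Matrix.of fun ip jq => Φ (Matrix.single ip.1 jq.1 1) ip.2 jq.2

section Cone

variable {ι : Type*} [Fintype ι]

lemma isDNNMat_iff {A : Matrix ι ι ℂ} : IsDNNMat A ↔ A.PosSemidef ∧ ∀ i j, 0 ≤ A i j := by
  simp only [IsDNNMat, Complex.nonneg_iff, eq_comm (a := (0 : ℝ))]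

lemma isCPMat_of_fintype {τ : Type*} [Fintype τ] {A : Matrix ι ι ℂ} (x : τ → ι → ℝ)
    (hx : ∀ t i, 0 ≤ x t i) (hA : ∀ i j, A i j = ((∑ t, x t i * x t j : ℝ) : ℂ)) :
    IsCPMat A := by
  let e := Fintype.equivFin τ
  refine ⟨Fintype.card τ, fun t => x (e.symm t), fun t i => hx _ i, fun i j => ?_⟩
  rw [hA, ← e.symm.sum_comp]

lemma IsCPMat.isDNNMat {A : Matrix ι ι ℂ} (hA : IsCPMat A) : IsDNNMat A := by
  obtain ⟨s, x, hx, hA⟩ := hA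
  have hB : A = (of fun t i => (x t i : ℂ))ᴴ * of fun t i => (x t i : ℂ) := by
    ext i j
    simp [hA, Matrix.mul_apply]
  refine isDNNMat_iff.2 ⟨hB ▸ posSemidef_conjTranspose_mul_self _, fun i j => ?_⟩
  rw [hA i j, Complex.zero_le_real]
  exact Finset.sum_nonneg fun t _ => mul_nonneg (hx t i) (hx t j)

lemma IsCPMat.conj_diagonal {A : Matrix ι ι ℂ} (hA : IsCPMat A) {v : ι → ℝ}
    (hv : ∀ i, 0 ≤ v i) : IsCPMat (of fun i j => (v i : ℂ) * A i j * v j) := by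
  obtain ⟨s, x, hx, hA⟩ := hA
  refine ⟨s, fun t i => v i * x t i, fun t i => mul_nonneg (hv i) (hx t i), fun i j => ?_⟩
  simp only [of_apply, hA]
  push_cast
  rw [Finset.mul_sum, Finset.sum_mul]
  exact Finset.sum_congr rfl fun t _ => by ring

end Cone

section DiagDominant

variable {ι : Type*} [Fintype ι] [DecidableEq ι]

open Finset in
lemma isCPMat_map_ofReal_of_diagDominant {N : Matrix ι ι ℝ} (hN : N.IsSymm)
    (hN₀ : ∀ i j, 0 ≤ N i j) (hdom : ∀ i, ∑ j ∈ univ.erase i, N i j ≤ N i i) :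
    IsCPMat (N.map (↑)) := by
  -- `N = Σ_{c ≠ d} (N c d / 2) (e_c + e_d)(e_c + e_d)ᵀ + Σ_c r c • e_c e_cᵀ`
  set f : ι → ι → ℝ := fun c d => if c = d then 0 else N c d / 2 with hf
  have hf₀ : ∀ c d, 0 ≤ f c d := fun c d => by
    simp only [hf]; split_ifs <;> positivity [hN₀ c d]
  have hfsymm : ∀ c d, f c d = f d c := fun c d => by
    simp only [hf, eq_comm (a := c), hN.apply c d]
  have hfsum : ∀ i, ∑ d, f i d = (∑ j ∈ univ.erase i, N i j) / 2 := fun i => by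
    rw [← add_sum_erase _ _ (mem_univ i), sum_div]
    simp only [hf, if_pos rfl, zero_add]
    exact sum_congr rfl fun d hd => if_neg (ne_of_mem_erase hd).symm
  set r : ι → ℝ := fun c => N c c - ∑ j ∈ univ.erase c, N c j with hr
  let x : (ι × ι) ⊕ ι → ι → ℝ := Sum.elim
    (fun cd k => √(f cd.1 cd.2) * ((if k = cd.1 then 1 else 0) + if k = cd.2 then 1 else 0))
    (fun c k => √(r c) * if k = c then 1 else 0)
  refine isCPMat_of_fintype x (fun t k => ?_) fun i j => ?_
  · rcases t with cd | c <;> simp only [x, Sum.elim_inl, Sum.elim_inr] <;> split_ifs <;> positivity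
  · have hsq : ∀ a u v : ℝ, 0 ≤ a → √a * u * (√a * v) = a * (u * v) := fun a u v ha => by
      rw [mul_mul_mul_comm, Real.mul_self_sqrt ha]
    have hr₀ : ∀ c, 0 ≤ r c := fun c => sub_nonneg.2 (hdom c)
    simp only [x, Fintype.sum_sum_type, Sum.elim_inl, Sum.elim_inr, Fintype.sum_prod_type,
      map_apply, hsq _ _ _ (hf₀ _ _), hsq _ _ _ (hr₀ _)]
    congr 1
    simp only [mul_add, mul_ite, mul_one, mul_zero, sum_add_distrib]
    by_cases hij : i = j
    · subst hij
      simp only [sum_ite_irrel, sum_const_zero, sum_ite_eq, mem_univ, ↓reduceIte,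
        sum_add_distrib]
      have hfii : f i i = 0 := if_pos rfl
      rw [Fintype.sum_congr _ _ fun c => hfsymm c i, hfsum, hfii, hr]
      ring
    · simp only [sum_ite_irrel, sum_const_zero, sum_ite_eq, mem_univ, ↓reduceIte, hij,
        zero_add, add_zero, hf, Ne.symm hij, hN.apply i j]
      ring

open Finset in
lemma isCPMat_map_ofReal_of_scaledDiagDominant {M : Matrix ι ι ℝ} (hM : M.IsSymm)
    (hM₀ : ∀ i j, 0 ≤ M i j) {w : ι → ℝ} (hw : ∀ i, 0 < w i)
    (hdom : ∀ i, ∑ j ∈ univ.erase i, M i j * w j ≤ M i i * w i) :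
    IsCPMat (M.map (↑)) := by
  set N : Matrix ι ι ℝ := of fun i j => w i * M i j * w j
  have hN : N.IsSymm := by
    ext i j
    simp only [N, transpose_apply, of_apply, hM.apply i j]
    ring
  have hNdom : ∀ i, ∑ j ∈ univ.erase i, N i j ≤ N i i := fun i => by
    simp only [N, of_apply, mul_assoc, ← mul_sum]
    exact mul_le_mul_of_nonneg_left (hdom i) (hw i).le
  have hNcp := (isCPMat_map_ofReal_of_diagDominant hN
    (fun i j => mul_nonneg (mul_nonneg (hw i).le (hM₀ i j)) (hw j).le) hNdom).conj_diagonal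
    (v := fun i => (w i)⁻¹) fun i => (inv_pos.2 (hw i)).le
  convert hNcp using 1
  ext i j
  have := (hw i).ne'
  have := (hw j).ne'
  simp only [N, map_apply, of_apply]
  push_cast
  field_simp

end DiagDominant

namespace Matrix

variable {α : Type*} [Fintype α]

lemma PosSemidef.apply_eq_zero_of_diag_eq_zero {𝕜 : Type*} [RCLike 𝕜] [DecidableEq α]
    {G : Matrix α α 𝕜} (hG : G.PosSemidef) {i : α} (hi : G i i = 0) (j : α) : G j i = 0 := by
  have h := (hG.dotProduct_mulVec_zero_iff (Pi.single i 1)).1 (by simp [hi])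
  simpa [mulVec_single_one] using congrFun h j

lemma mulVec_optionElim {β : Type*} (G : Matrix β (Option α) ℝ) (t : ℝ) (v : α → ℝ) (o : β) :
    (G *ᵥ fun o => o.elim t v) o = G o none * t + ∑ i, G o (some i) * v i := by
  simp [mulVec, dotProduct, Fintype.sum_option]

lemma PosSemidef.schurComplement_none {G : Matrix (Option α) (Option α) ℝ} (hG : G.PosSemidef)
    (ha : 0 < G none none) :
    (G.submatrix some some - (G none none)⁻¹ •
      vecMulVec (fun i => G (some i) none) fun i => G (some i) none).PosSemidef := by
  set a := G none none
  set g : α → ℝ := fun i => G (some i) none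
  have hsymm : ∀ i, G none (some i) = g i := fun i => by simpa using hG.1.apply (some i) none
  refine .of_dotProduct_mulVec_nonneg ?_ fun v => ?_
  · ext i j
    simp [g, vecMulVec_apply, mul_comm, ← hG.1.apply (some i) (some j)]
  · -- test `G` against `v` extended by the minimising value at `none`
    have h := hG.dotProduct_mulVec_nonneg fun o => o.elim (-(a⁻¹ * (g ⬝ᵥ v))) v
    rw [dotProduct, Fintype.sum_option] at h
    simp only [mulVec_optionElim, Option.elim_none, Option.elim_some, star_trivial, hsymm] at h
    have e : ∑ i, v i * (G (some i) none * -(a⁻¹ * (g ⬝ᵥ v)) + ∑ j, G (some i) (some j) * v j)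
        = -(a⁻¹ * (g ⬝ᵥ v)) * (g ⬝ᵥ v) + v ⬝ᵥ (G.submatrix some some *ᵥ v) := by
      simp only [mul_add, Finset.sum_add_distrib, dotProduct, mulVec, submatrix_apply,
        Finset.mul_sum, g]
      congr 1
      exact Finset.sum_congr rfl fun i _ => by ring
    rw [e] at h
    simp only [star_trivial, sub_mulVec, smul_mulVec, vecMulVec_mulVec, dotProduct_sub,
      dotProduct_smul, op_smul_eq_mul, smul_eq_mul, dotProduct_comm v g]
    convert h using 1
    change _ = -(a⁻¹ * g ⬝ᵥ v) * (a * -(a⁻¹ * g ⬝ᵥ v) + g ⬝ᵥ v) + _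
    field_simp
    ring

lemma exists_pos_mulVec_nonneg_option
    (ih : ∀ G : Matrix α α ℝ, G.PosSemidef → (∀ i j, i ≠ j → G i j ≤ 0) →
      ∃ w : α → ℝ, (∀ i, 0 < w i) ∧ 0 ≤ G *ᵥ w)
    {G : Matrix (Option α) (Option α) ℝ} (hG : G.PosSemidef) (hZ : ∀ i j, i ≠ j → G i j ≤ 0) :
    ∃ w : Option α → ℝ, (∀ i, 0 < w i) ∧ 0 ≤ G *ᵥ w := by
  classical
  set a := G none none
  set g : α → ℝ := fun i => G (some i) none
  have hsymm : ∀ i, G none (some i) = g i := fun i => by simpa using hG.1.apply (some i) none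
  have hg : ∀ i, g i ≤ 0 := fun i => hZ _ _ (Option.some_ne_none i)
  have hZ' : ∀ i j : α, i ≠ j → G (some i) (some j) ≤ 0 := fun i j hij =>
    hZ _ _ (Option.some_injective α |>.ne hij)
  by_cases hg0 : g = 0
  · obtain ⟨w, hw, hGw⟩ := ih _ (hG.submatrix some) hZ'
    refine ⟨fun o => o.elim 1 w, ?_, ?_⟩
    · rintro (_ | i)
      exacts [one_pos, hw i]
    · rintro (_ | i) <;> rw [Pi.zero_apply, mulVec_optionElim]
      · simpa [hsymm, hg0] using hG.diag_nonneg
      · simpa [show G (some i) none = 0 from congrFun hg0 i, mulVec, dotProduct] using hGw i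
  · have ha : 0 < a := hG.diag_nonneg.lt_of_ne fun h => hg0 <| funext fun i =>
      hG.apply_eq_zero_of_diag_eq_zero h.symm (some i)
    -- the Schur complement is again a Z-matrix since `g ≤ 0`; the last weight `t` makes row
    -- `none` of `G w` vanish, and `t > 0` because `g ≠ 0`
    set S := G.submatrix some some - a⁻¹ • vecMulVec g g
    have hSZ : ∀ i j, i ≠ j → S i j ≤ 0 := fun i j hij => by
      have : 0 ≤ a⁻¹ * (g i * g j) := by
        have := mul_nonneg_of_nonpos_of_nonpos (hg i) (hg j)
        positivity
      simp only [S, sub_apply, submatrix_apply, smul_apply, vecMulVec_apply, smul_eq_mul]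
      linarith [hZ' i j hij]
    obtain ⟨w, hw, hSw⟩ := ih S (hG.schurComplement_none ha) hSZ
    have hgw : g ⬝ᵥ w < 0 := by
      obtain ⟨i, hi⟩ := Function.ne_iff.1 hg0
      refine (Finset.sum_lt_sum (fun j _ => mul_nonpos_of_nonpos_of_nonneg (hg j) (hw j).le)
        ⟨i, Finset.mem_univ i, mul_neg_of_neg_of_pos ((hg i).lt_of_ne hi) (hw i)⟩).trans_eq ?_
      simp
    set t := -(a⁻¹ * (g ⬝ᵥ w))
    refine ⟨fun o => o.elim t w, ?_, ?_⟩
    · rintro (_ | i)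
      exacts [neg_pos.2 (mul_neg_of_pos_of_neg (inv_pos.2 ha) hgw), hw i]
    · rintro (_ | i) <;> rw [Pi.zero_apply, mulVec_optionElim]
      · simp only [hsymm]
        change 0 ≤ a * -(a⁻¹ * g ⬝ᵥ w) + g ⬝ᵥ w
        rw [mul_neg, mul_inv_cancel_left₀ ha.ne', neg_add_cancel]
      · have := hSw i
        simp only [S, sub_mulVec, smul_mulVec, vecMulVec_mulVec, Pi.sub_apply, Pi.smul_apply,
          op_smul_eq_mul, smul_eq_mul, Pi.zero_apply] at this
        change 0 ≤ g i * -(a⁻¹ * g ⬝ᵥ w) + (G.submatrix some some *ᵥ w) i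
        linarith

theorem exists_pos_mulVec_nonneg_of_posSemidef {G : Matrix α α ℝ} (hG : G.PosSemidef)
    (hZ : ∀ i j, i ≠ j → G i j ≤ 0) : ∃ w : α → ℝ, (∀ i, 0 < w i) ∧ 0 ≤ G *ᵥ w := by
  refine Fintype.induction_empty_option (P := fun α _ => ∀ G : Matrix α α ℝ, G.PosSemidef →
    (∀ i j, i ≠ j → G i j ≤ 0) → ∃ w : α → ℝ, (∀ i, 0 < w i) ∧ 0 ≤ G *ᵥ w) ?_ ?_
    (fun _ _ ih _ => exists_pos_mulVec_nonneg_option ih) α G hG hZ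
  · intro α β _ e ih G hG hZ
    obtain ⟨w, hw, hGw⟩ := ih (G.submatrix e e) (hG.submatrix e) fun i j hij =>
      hZ _ _ (e.injective.ne hij)
    refine ⟨w ∘ e.symm, fun i => hw _, fun i => ?_⟩
    simpa [submatrix_mulVec_equiv] using hGw (e.symm i)
  · exact fun _ _ _ => ⟨fun _ => 1, fun i => i.elim, fun i => i.elim⟩

lemma PosSemidef.map_re {A : Matrix α α ℂ} (hA : A.PosSemidef) :
    (A.map Complex.re).PosSemidef := by
  refine .of_dotProduct_mulVec_nonneg ?_ fun x => ?_
  · ext i j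
    simp [← hA.1.apply i j]
  · have h := (Complex.nonneg_iff.1 (hA.dotProduct_mulVec_nonneg fun i => (x i : ℂ))).1
    refine h.trans_eq ?_
    simp [dotProduct, mulVec, Complex.re_sum, Finset.mul_sum]

end Matrix

open Finset in
theorem isCPMat_of_isDNNMat_of_bipartite {ι : Type*} [Fintype ι] [DecidableEq ι]
    {A : Matrix ι ι ℂ} (hA : IsDNNMat A) (col : ι → Fin 2)
    (hbip : ∀ i j, i ≠ j → col i = col j → A i j = 0) : IsCPMat A := by
  set γ := A.map Complex.re
  have hAγ : A = γ.map (↑) := by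
    ext i j
    exact Complex.ext rfl (hA.2 i j).2
  have hγ₀ : ∀ i j, 0 ≤ γ i j := fun i j => (hA.2 i j).1
  have hγ : γ.PosSemidef := hA.1.map_re
  set s : ι → ℝ := fun i => if col i = 0 then 1 else -1
  -- the comparison matrix of `γ`, congruent to `γ` through the signs `s` of the colouring
  set C : Matrix ι ι ℝ := of fun i j => if i = j then γ i i else -γ i j
  have hC : C = (diagonal s)ᴴ * γ * diagonal s := by
    ext i j
    simp only [C, s, of_apply, diagonal_conjTranspose, diagonal_mul, mul_diagonal, star_trivial]
    by_cases hij : i = j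
    · subst hij
      rw [if_pos rfl]
      split_ifs <;> ring
    by_cases hcol : col i = col j
    · simp [hij, γ, hbip i j hij hcol]
    · rw [if_neg hij]
      split_ifs <;> first | exact absurd (by omega) hcol | ring
  obtain ⟨w, hw, hCw⟩ := exists_pos_mulVec_nonneg_of_posSemidef
    (hC ▸ hγ.conjTranspose_mul_mul_same _) fun i j hij => by simpa [C, hij] using hγ₀ i j
  rw [hAγ]
  refine isCPMat_map_ofReal_of_scaledDiagDominant (isHermitian_iff_isSymm.1 hγ.1) hγ₀ hw
    fun i => ?_
  have := hCw i
  rw [Pi.zero_apply, mulVec, dotProduct, ← add_sum_erase _ _ (mem_univ i),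
    sum_congr rfl fun j hj => by rw [show C i j = -γ i j from if_neg (ne_of_mem_erase hj).symm]]
    at this
  simp only [C, of_apply, if_pos, neg_mul, sum_neg_distrib] at this
  linarith

section Channel

variable {n m : ℕ} (Φ : Matrix (Fin n) (Fin n) ℂ →ₗ[ℂ] Matrix (Fin m) (Fin m) ℂ)

lemma idTensor_apply (k : ℕ) (X : Matrix (Fin k × Fin n) (Fin k × Fin n) ℂ) (a b : Fin k)
    (p q : Fin m) :
    idTensor Φ k X (a, p) (b, q) = ∑ i, ∑ j, X (a, i) (b, j) * choi Φ (i, p) (j, q) := by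
  conv_lhs => rw [idTensor, of_apply, matrix_eq_sum_single (of fun i j => X (a, i) (b, j))]
  simp only [map_sum, Matrix.sum_apply, choi, of_apply]
  refine Finset.sum_congr rfl fun i _ => Finset.sum_congr rfl fun j _ => ?_
  rw [show single i j (X (a, i) (b, j)) = X (a, i) (b, j) • single i j 1 by simp, map_smul]
  rfl

def maxEntangled (n : ℕ) : Matrix (Fin n × Fin n) (Fin n × Fin n) ℂ :=
  of fun c d => if c.1 = c.2 ∧ d.1 = d.2 then 1 else 0

lemma isCPMat_maxEntangled (n : ℕ) : IsCPMat (maxEntangled n) := by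
  refine isCPMat_of_fintype (fun (_ : Unit) (c : Fin n × Fin n) => if c.1 = c.2 then 1 else 0)
    (fun _ _ => by positivity) fun c d => ?_
  simp only [maxEntangled, of_apply, ite_and, Finset.univ_unique, Finset.sum_singleton]
  split_ifs <;> simp

lemma idTensor_maxEntangled : idTensor Φ n (maxEntangled n) = choi Φ := by
  ext ⟨i, p⟩ ⟨j, q⟩
  simp [idTensor_apply, maxEntangled, ite_and]

variable {Φ}

lemma IsCPCP.isCPMat_choi (h : IsCPCP Φ) : IsCPMat (choi Φ) :=
  idTensor_maxEntangled Φ ▸ h n _ (isCPMat_maxEntangled n)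

lemma IsCPDNN.isDNNMat_choi (h : IsCPDNN Φ) : IsDNNMat (choi Φ) :=
  idTensor_maxEntangled Φ ▸ h n _ (isCPMat_maxEntangled n).isDNNMat

lemma isCPDNN_of_choi_nonneg (hCP : IsCPMap Φ) (h : ∀ c d, 0 ≤ choi Φ c d) : IsCPDNN Φ := by
  intro k X hX
  rw [isDNNMat_iff] at hX ⊢
  refine ⟨hCP k X hX.1, fun ⟨a, p⟩ ⟨b, q⟩ => ?_⟩
  rw [idTensor_apply]
  exact Finset.sum_nonneg fun i _ => Finset.sum_nonneg fun j _ => mul_nonneg (hX.2 _ _) (h _ _)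

lemma isCPCP_of_isCPMat_choi (h : IsCPMat (choi Φ)) : IsCPCP Φ := by
  obtain ⟨r, y, hy, hC⟩ := h
  rintro k X ⟨s, x, hx, hX⟩
  refine isCPMat_of_fintype (fun (σt : Fin s × Fin r) (ap : Fin k × Fin m) =>
    ∑ i, x σt.1 (ap.1, i) * y σt.2 (i, ap.2))
    (fun _ _ => Finset.sum_nonneg fun i _ => mul_nonneg (hx _ _) (hy _ _))
    fun ⟨a, p⟩ ⟨b, q⟩ => ?_
  simp only [idTensor_apply, hX, hC, ← Complex.ofReal_mul, ← Complex.ofReal_sum]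
  congr 1
  simp only [Finset.sum_mul_sum, Fintype.sum_prod_type, mul_mul_mul_comm (x _ _) (y _ _)]
  rw [Finset.sum_congr rfl fun i _ => Finset.sum_comm, Finset.sum_comm]
  refine Finset.sum_congr rfl fun σ _ => ?_
  rw [Finset.sum_congr rfl fun i _ => Finset.sum_comm, Finset.sum_comm]

lemma IsTP.choi_eq_zero (hTP : IsTP Φ) (h : ∀ c d, 0 ≤ choi Φ c d) {c d : Fin n × Fin m}
    (hcd : c ≠ d) (hsnd : c.2 = d.2) : choi Φ c d = 0 := by
  obtain ⟨i, p⟩ := c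
  obtain ⟨j, q⟩ := d
  obtain rfl : p = q := hsnd
  have hij : i ≠ j := fun hij => hcd (hij ▸ rfl)
  have htr : ∑ q, choi Φ (i, q) (j, q) = 0 := by
    simpa [choi, trace, hij] using hTP (single i j 1)
  exact (Finset.sum_eq_zero_iff_of_nonneg fun q _ => h _ _).1 htr p (Finset.mem_univ p)

end Channel

/-- For quantum channels `Φ : Mₙ(ℂ) → M₂(ℂ)`, being CPDNN is equivalent to
being CPCP. -/
theorem stmt9 (n : ℕ)
    (Φ : Matrix (Fin n) (Fin n) ℂ →ₗ[ℂ] Matrix (Fin 2) (Fin 2) ℂ)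
    (hCP : IsCPMap Φ) (hTP : IsTP Φ) :
    IsCPDNN Φ ↔ IsCPCP Φ := by
  refine ⟨fun h => isCPCP_of_isCPMat_choi ?_, fun h => isCPDNN_of_choi_nonneg hCP
    (isDNNMat_iff.1 h.isCPMat_choi.isDNNMat).2⟩
  have hC₀ := (isDNNMat_iff.1 h.isDNNMat_choi).2
  exact isCPMat_of_isDNNMat_of_bipartite h.isDNNMat_choi Prod.snd fun c d hcd hcol =>
    hTP.choi_eq_zero hC₀ hcd hcol
end

section
/- If A ∈ M_r(ℝ) is doubly nonnegative (positive semidefinite and entrywise nonnegative) and the graph G(A) of A is bipartite, then A is completely positive, i.e., A = Σ_{t=1}^s x_t x_tᵀ for some finitely many entrywise nonnegative vectors x_t ∈ ℝ^r. -/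
open Matrix

/-- A real matrix is completely positive if it is a finite sum of rank-one
matrices `x xᵀ` with `x` entrywise nonnegative. -/
def IsCPMatrix {ι : Type*} [Fintype ι] (A : Matrix ι ι ℝ) : Prop :=
  ∃ (s : ℕ) (x : Fin s → ι → ℝ), (∀ t i, 0 ≤ x t i) ∧
    A = ∑ t, Matrix.vecMulVec (x t) (x t)

/-!
Flipping the signs of the rows and columns indexed by one side of the bipartition turns `A` into
a positive semidefinite matrix `M` with nonpositive off-diagonal entries. Such a matrix admits a
positive vector `d` with `M d ≥ 0`: if `d` minimises `xᵀ M x` on the standard simplex, first-order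
optimality makes `(M d)ᵢ` minimal and constant on the support of `d`, where it equals
`dᵀ M d ≥ 0`; then `M d ≥ 0` forces `M` to vanish between the support and the zero set of `d`,
and one recurses on the zero set. Read back on `A`, `M d ≥ 0` says that `D A D` is diagonally
dominant for `D = diag d`, and a symmetric nonnegative diagonally dominant matrix is a nonnegative
combination of the matrices `(eₚ + e_q)(eₚ + e_q)ᵀ` and `eₚ eₚᵀ`.
-/

open Finset Filter Topology

lemma Matrix.sum_smul_vecMulVec_single_add_single {ι : Type*} [Fintype ι] [DecidableEq ι]
    (w : ι → ι → ℝ) :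
    ∑ p, ∑ q, w p q • vecMulVec (Pi.single p 1 + Pi.single q 1) (Pi.single p 1 + Pi.single q 1)
      = of fun i j => w i j + w j i + if i = j then ∑ q, (w i q + w q i) else 0 := by
  ext i j
  simp only [Matrix.sum_apply, Matrix.smul_apply, vecMulVec_apply, Pi.add_apply, Pi.single_apply,
    smul_eq_mul, of_apply, mul_add, sum_add_distrib, mul_ite, mul_one, mul_zero,
    sum_ite_eq, mem_univ, if_true, sum_ite_irrel, sum_const_zero]
  split_ifs with hij
  · subst hij
    ring
  · ring

namespace IsCPMatrix

variable {ι : Type*} [Fintype ι]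

lemma zero : IsCPMatrix (0 : Matrix ι ι ℝ) := ⟨0, Fin.elim0, fun t => t.elim0, by simp⟩

lemma add {A B : Matrix ι ι ℝ} (hA : IsCPMatrix A) (hB : IsCPMatrix B) :
    IsCPMatrix (A + B) := by
  obtain ⟨s, x, hx, rfl⟩ := hA
  obtain ⟨t, y, hy, rfl⟩ := hB
  refine ⟨s + t, Fin.append x y, Fin.addCases (by simpa using hx) (by simpa using hy), ?_⟩
  simp [Fin.sum_univ_add]

lemma sum {κ : Type*} (s : Finset κ) {A : κ → Matrix ι ι ℝ} (h : ∀ k ∈ s, IsCPMatrix (A k)) :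
    IsCPMatrix (∑ k ∈ s, A k) :=
  sum_induction _ _ (fun _ _ => add) zero h

lemma vecMulVec_self {x : ι → ℝ} (hx : 0 ≤ x) : IsCPMatrix (vecMulVec x x) :=
  ⟨1, fun _ => x, fun _ => hx, by simp⟩

lemma smul {A : Matrix ι ι ℝ} (hA : IsCPMatrix A) {c : ℝ} (hc : 0 ≤ c) : IsCPMatrix (c • A) := by
  obtain ⟨s, x, hx, rfl⟩ := hA
  refine ⟨s, fun t => √c • x t, fun t i => mul_nonneg (Real.sqrt_nonneg c) (hx t i), ?_⟩
  simp [smul_sum, smul_vecMulVec, vecMulVec_smul, smul_smul, Real.mul_self_sqrt hc]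

lemma diagonal [DecidableEq ι] {c : ι → ℝ} (hc : 0 ≤ c) : IsCPMatrix (diagonal c) := by
  rw [← sum_single_eq_diagonal]
  refine sum _ fun i _ => ?_
  rw [← mul_one (c i), ← smul_eq_mul, ← smul_single, single_eq_single_vecMulVec_single]
  exact (vecMulVec_self (Pi.single_nonneg.mpr zero_le_one)).smul (hc i)

lemma mul_mul_transpose {κ : Type*} [Fintype κ] {A : Matrix ι ι ℝ} (hA : IsCPMatrix A)
    {P : Matrix κ ι ℝ} (hP : ∀ i j, 0 ≤ P i j) : IsCPMatrix (P * A * Pᵀ) := by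
  obtain ⟨s, x, hx, rfl⟩ := hA
  refine ⟨s, fun t => P *ᵥ x t, fun t i => sum_nonneg fun j _ => mul_nonneg (hP i j) (hx t j), ?_⟩
  simp [Matrix.mul_sum, Matrix.sum_mul, mul_vecMulVec, vecMulVec_mul, vecMul_transpose]

theorem of_diagDominant [DecidableEq ι] {B : Matrix ι ι ℝ} (hB : B.IsSymm) (hnn : ∀ i j, 0 ≤ B i j)
    (hdom : ∀ i, ∑ j ∈ univ.erase i, B i j ≤ B i i) : IsCPMatrix B := by
  set w : ι → ι → ℝ := fun p q => if p = q then 0 else B p q / 2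
  have hrow : ∀ i, ∑ q, (w i q + w q i) = ∑ j ∈ univ.erase i, B i j := fun i => by
    rw [← sum_erase_add _ _ (mem_univ i)]
    refine (add_eq_left.mpr (by simp [w])).trans (sum_congr rfl fun q hq => ?_)
    simp [w, ne_of_mem_erase hq, (ne_of_mem_erase hq).symm, hB.apply i q]
  have hdecomp : B = ∑ p, ∑ q, w p q • vecMulVec (Pi.single p 1 + Pi.single q 1)
        (Pi.single p 1 + Pi.single q 1)
      + Matrix.diagonal fun i => B i i - ∑ j ∈ univ.erase i, B i j := by
    rw [sum_smul_vecMulVec_single_add_single]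
    ext i j
    simp only [Matrix.add_apply, of_apply, diagonal_apply, hrow]
    split_ifs with hij
    · subst hij
      simp [w]
    · simp [w, hij, (Ne.symm hij), hB.apply i j]
  rw [hdecomp]
  refine (sum _ fun p _ => sum _ fun q _ => (vecMulVec_self ?_).smul ?_).add
    (diagonal fun i => sub_nonneg.mpr (hdom i))
  · exact add_nonneg (Pi.single_nonneg.mpr zero_le_one) (Pi.single_nonneg.mpr zero_le_one)
  · by_cases hpq : p = q
    · simp [w, hpq]
    · simpa [w, hpq] using div_nonneg (hnn p q) zero_le_two

theorem of_weightedDiagDominant [DecidableEq ι] {A : Matrix ι ι ℝ} (hA : A.IsSymm)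
    (hnn : ∀ i j, 0 ≤ A i j) {d : ι → ℝ} (hd : ∀ i, 0 < d i)
    (hdom : ∀ i, ∑ j ∈ univ.erase i, A i j * d j ≤ A i i * d i) : IsCPMatrix A := by
  set B := Matrix.diagonal d * A * Matrix.diagonal d
  have hBapply : ∀ i j, B i j = d i * A i j * d j := by simp [B, mul_comm]
  have hB : IsCPMatrix B := by
    refine of_diagDominant (IsSymm.ext fun i j => ?_) (fun i j => ?_) (fun i => ?_)
    · simp only [hBapply, hA.apply]
      ring
    · rw [hBapply]
      exact mul_nonneg (mul_nonneg (hd i).le (hnn i j)) (hd j).le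
    · simp only [hBapply, mul_assoc, ← mul_sum]
      exact mul_le_mul_of_nonneg_left (hdom i) (hd i).le
  have hA_eq : A = Matrix.diagonal d⁻¹ * B * (Matrix.diagonal d⁻¹)ᵀ := by
    ext i j
    simp only [B, diagonal_transpose, diagonal_mul, mul_diagonal, Pi.inv_apply]
    rw [mul_assoc (d i), inv_mul_cancel_left₀ (hd i).ne', mul_inv_cancel_right₀ (hd j).ne']
  rw [hA_eq]
  refine hB.mul_mul_transpose fun i j => ?_
  rw [diagonal_apply]
  split_ifs
  · exact inv_nonneg.mpr (hd i).le
  · exact le_rfl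

end IsCPMatrix

section ZMatrix

variable {ι : Type*} [Fintype ι] {M : Matrix ι ι ℝ}

lemma nonneg_of_forall_Ioc_mul_add_sq_mul_nonneg {a c t₀ : ℝ} (ht₀ : 0 < t₀)
    (h : ∀ t ∈ Set.Ioc 0 t₀, 0 ≤ t * a + t ^ 2 * c) : 0 ≤ a := by
  have hlim : Tendsto (fun t => a + t * c) (𝓝[>] 0) (𝓝 a) := by
    have hc : Continuous (fun t => a + t * c) := by fun_prop
    simpa using (hc.tendsto 0).mono_left nhdsWithin_le_nhds
  refine ge_of_tendsto hlim ?_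
  filter_upwards [Ioc_mem_nhdsGT ht₀] with t ht
  have : 0 ≤ t * (a + t * c) := by linarith [h t ht]
  exact nonneg_of_mul_nonneg_right this ht.1

lemma Matrix.IsSymm.dotProduct_mulVec_add_smul (hM : M.IsSymm) (x y : ι → ℝ) (t : ℝ) :
    (x + t • y) ⬝ᵥ M *ᵥ (x + t • y)
      = x ⬝ᵥ M *ᵥ x + 2 * t * (y ⬝ᵥ M *ᵥ x) + t ^ 2 * (y ⬝ᵥ M *ᵥ y) := by
  have hxy : x ⬝ᵥ M *ᵥ y = y ⬝ᵥ M *ᵥ x := by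
    rw [dotProduct_mulVec, ← mulVec_transpose, hM.eq, dotProduct_comm]
  simp only [mulVec_add, mulVec_smul, add_dotProduct, dotProduct_add, smul_dotProduct,
    dotProduct_smul, smul_eq_mul, hxy]
  ring

lemma Matrix.IsSymm.mulVec_apply_le_of_isMinOn_stdSimplex (hM : M.IsSymm) {d : ι → ℝ}
    (hd : d ∈ stdSimplex ℝ ι) (hmin : IsMinOn (fun x => x ⬝ᵥ M *ᵥ x) (stdSimplex ℝ ι) d)
    {i : ι} (hi : d i ≠ 0) (j : ι) : (M *ᵥ d) i ≤ (M *ᵥ d) j := by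
  classical
  rcases eq_or_ne i j with rfl | hij
  · exact le_rfl
  set w : ι → ℝ := Pi.single j 1 - Pi.single i 1
  have hdi : 0 < d i := (hd.1 i).lt_of_ne' hi
  have hw : w ⬝ᵥ M *ᵥ d = (M *ᵥ d) j - (M *ᵥ d) i := by
    simp only [w, sub_dotProduct, single_one_dotProduct]
  have hmove : ∀ t ∈ Set.Ioc 0 (d i), d + t • w ∈ stdSimplex ℝ ι := by
    rintro t ⟨ht0, hti⟩
    refine ⟨fun k => ?_, ?_⟩
    · rcases eq_or_ne k i with rfl | hki
      · simpa [w, Ne.symm hij] using hti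
      · have hdk := hd.1 k
        by_cases hkj : k = j
        · subst hkj
          simpa [w, hki] using add_nonneg hdk ht0.le
        · simpa [w, hki, hkj] using hdk
    · simp [w, sum_add_distrib, ← mul_sum, hd.2]
  have hgain : ∀ t ∈ Set.Ioc 0 (d i),
      0 ≤ t * (2 * ((M *ᵥ d) j - (M *ᵥ d) i)) + t ^ 2 * (w ⬝ᵥ M *ᵥ w) := by
    intro t ht
    have := hmin (hmove t ht)
    simp only [Set.mem_ofPred_eq, hM.dotProduct_mulVec_add_smul, hw] at this
    linarith
  linarith [nonneg_of_forall_Ioc_mul_add_sq_mul_nonneg hdi hgain]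

lemma Matrix.PosSemidef.mulVec_nonneg_of_isMinOn_stdSimplex (hM : M.PosSemidef) {d : ι → ℝ}
    (hd : d ∈ stdSimplex ℝ ι) (hmin : IsMinOn (fun x => x ⬝ᵥ M *ᵥ x) (stdSimplex ℝ ι) d) :
    0 ≤ M *ᵥ d := by
  have hsymm : M.IsSymm := hM.isHermitian
  obtain ⟨i, -, hi⟩ := exists_ne_zero_of_sum_ne_zero (hd.2.trans_ne one_ne_zero)
  have hle : ∀ k, d k ≠ 0 → ∀ j, (M *ᵥ d) k ≤ (M *ᵥ d) j := fun _ hk =>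
    hsymm.mulVec_apply_le_of_isMinOn_stdSimplex hd hmin hk
  have hconst : d ⬝ᵥ M *ᵥ d = (M *ᵥ d) i := by
    have : ∀ k, d k * (M *ᵥ d) k = d k * (M *ᵥ d) i := fun k => by
      rcases eq_or_ne (d k) 0 with hk | hk
      · simp [hk]
      · rw [(hle k hk i).antisymm (hle i hi k)]
    simp only [dotProduct, this, ← sum_mul, hd.2, one_mul]
  have hmin_nonneg : 0 ≤ (M *ᵥ d) i := by
    simpa [hconst] using hM.dotProduct_mulVec_nonneg d
  exact fun j => hmin_nonneg.trans (hle i hi j)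

lemma Matrix.apply_eq_zero_of_mulVec_apply_nonneg (hZ : ∀ i j, i ≠ j → M i j ≤ 0)
    {d : ι → ℝ} (hd : 0 ≤ d) {i : ι} (hMd : 0 ≤ (M *ᵥ d) i) (hi : d i = 0) {k : ι}
    (hk : d k ≠ 0) : M i k = 0 := by
  have hterm : ∀ j ∈ univ, M i j * d j ≤ 0 := fun j _ => by
    rcases eq_or_ne i j with rfl | hij
    · simp [hi]
    · exact mul_nonpos_of_nonpos_of_nonneg (hZ i j hij) (hd j)
  have hsum : ∑ j, M i j * d j = 0 := (sum_nonpos hterm).antisymm hMd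
  exact (mul_eq_zero.mp ((sum_eq_zero_iff_of_nonpos hterm).mp hsum k (mem_univ k))).resolve_right hk

theorem Matrix.PosSemidef.exists_pos_mulVec_nonneg (hM : M.PosSemidef)
    (hZ : ∀ i j, i ≠ j → M i j ≤ 0) : ∃ d : ι → ℝ, (∀ i, 0 < d i) ∧ 0 ≤ M *ᵥ d := by
  induction h : Fintype.card ι using Nat.strong_induction_on generalizing ι with
  | _ n ih =>
  classical
  rcases isEmpty_or_nonempty ι with hι | ⟨⟨i₀⟩⟩
  · exact ⟨0, isEmptyElim, isEmptyElim⟩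
  obtain ⟨d, hd, hmin⟩ := (isCompact_stdSimplex ℝ ι).exists_isMinOn
    ⟨Pi.single i₀ 1, single_mem_stdSimplex ℝ i₀⟩
    (by fun_prop : Continuous fun x : ι → ℝ => x ⬝ᵥ M *ᵥ x).continuousOn
  have hMd := hM.mulVec_nonneg_of_isMinOn_stdSimplex hd hmin
  have hblock : ∀ i k, d i = 0 → d k ≠ 0 → M i k = 0 := fun _ _ hi hk =>
    apply_eq_zero_of_mulVec_apply_nonneg hZ hd.1 (hMd _) hi hk
  -- recurse on the zero set of `d`, a proper subset since `d` sums to one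
  obtain ⟨i₁, -, hi₁⟩ := exists_ne_zero_of_sum_ne_zero (hd.2.trans_ne one_ne_zero)
  obtain ⟨d', hd'pos, hMd'⟩ := ih _ (h ▸ Fintype.card_subtype_lt (p := fun i => d i = 0) hi₁)
    (ι := {j // d j = 0}) (hM.submatrix Subtype.val)
    (fun i j hij => hZ i j (Subtype.val_injective.ne hij)) rfl
  set e : ι → ℝ := fun j => if h : d j = 0 then d' ⟨j, h⟩ else 0
  have hMe : ∀ i, (M *ᵥ e) i = ∑ j : {j // d j = 0}, M i j * d' j := fun i => by
    rw [mulVec, dotProduct, ← Fintype.sum_subtype_add_sum_subtype (fun j => d j = 0)]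
    have hZe : ∀ j : {j // d j = 0}, M i j * e j = M i j * d' j := fun j => by simp [e, j.2]
    have hSe : ∀ j : {j // d j ≠ 0}, M i j * e j = 0 := fun j => by simp [e, j.2]
    simp only [hZe, hSe, sum_const_zero, add_zero]
  refine ⟨d + e, fun i => ?_, ?_⟩
  · by_cases hi : d i = 0
    · simpa [e, hi] using hd'pos ⟨i, hi⟩
    · simpa [e, hi] using (hd.1 i).lt_of_ne' hi
  · rw [mulVec_add]
    refine add_nonneg hMd fun i => ?_
    by_cases hi : d i = 0
    · rw [Pi.zero_apply, hMe]
      simpa [mulVec, dotProduct] using hMd' ⟨i, hi⟩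
    · have hsymm : M.IsSymm := hM.isHermitian
      rw [Pi.zero_apply, hMe,
        sum_eq_zero fun j _ => by rw [← hsymm.apply, hblock _ i j.2 hi, zero_mul]]

end ZMatrix

theorem Matrix.PosSemidef.exists_pos_diagDominant_scaling_of_bipartite {ι : Type*} [Fintype ι]
    [DecidableEq ι] {A : Matrix ι ι ℝ} (hA : A.PosSemidef) (hnn : ∀ i j, 0 ≤ A i j) {S : Set ι}
    (hS : ∀ i j, i ≠ j → A i j ≠ 0 → (i ∈ S ∧ j ∉ S) ∨ (i ∉ S ∧ j ∈ S)) :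
    ∃ d : ι → ℝ, (∀ i, 0 < d i) ∧ ∀ i, ∑ j ∈ univ.erase i, A i j * d j ≤ A i i * d i := by
  classical
  set σ : ι → ℝ := fun i => if i ∈ S then 1 else -1
  have hσ : ∀ i j, σ i * A i j * σ j = if i = j then A i j else -A i j := fun i j => by
    split_ifs with hij
    · subst hij
      by_cases hi : i ∈ S <;> simp [σ, hi]
    · by_cases hA0 : A i j = 0
      · simp [hA0]
      · rcases hS i j hij hA0 with ⟨hi, hj⟩ | ⟨hi, hj⟩ <;> simp [σ, hi, hj]
  set M := Matrix.diagonal σ * A * Matrix.diagonal σ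
  have hMapply : ∀ i j, M i j = if i = j then A i j else -A i j := fun i j => by
    simp [M, ← hσ, mul_comm]
  have hM : M.PosSemidef := by
    simpa [M] using hA.mul_mul_conjTranspose_same (Matrix.diagonal σ)
  obtain ⟨d, hd, hMd⟩ := hM.exists_pos_mulVec_nonneg fun i j hij => by
    simpa [hMapply, hij] using hnn i j
  refine ⟨d, hd, fun i => ?_⟩
  have hrow : (M *ᵥ d) i = A i i * d i - ∑ j ∈ univ.erase i, A i j * d j := by
    rw [mulVec, dotProduct, ← add_sum_erase _ _ (mem_univ i), hMapply, if_pos rfl,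
      sub_eq_add_neg, ← sum_neg_distrib]
    exact congrArg _ (sum_congr rfl fun j hj => by
      rw [hMapply, if_neg (ne_of_mem_erase hj).symm, neg_mul])
  linarith [show 0 ≤ (M *ᵥ d) i from hMd i]

/-- Berman–Grone: a doubly nonnegative matrix whose graph is bipartite (there
is a set `S` of vertices such that every edge, i.e. every pair `i ≠ j` with
`A i j ≠ 0`, has exactly one endpoint in `S`) is completely positive. -/
theorem stmt14 (r : ℕ) (A : Matrix (Fin r) (Fin r) ℝ)
    (hPSD : A.PosSemidef) (hNN : ∀ i j, 0 ≤ A i j)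
    (hBip : ∃ S : Set (Fin r), ∀ i j, i ≠ j → A i j ≠ 0 →
      (i ∈ S ∧ j ∉ S) ∨ (i ∉ S ∧ j ∈ S)) :
    IsCPMatrix A := by
  obtain ⟨S, hS⟩ := hBip
  obtain ⟨d, hd, hdom⟩ := hPSD.exists_pos_diagDominant_scaling_of_bipartite hNN hS
  exact IsCPMatrix.of_weightedDiagDominant hPSD.isHermitian hNN hd hdom
end
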